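/- arXiv:1412.4355 — 2 statements merged into one kernel-verified Lean document; each statement's English description precedes it below -/
import Mathlib

section
/- Let P : ℝ^m → (0, ∞) be defined for η = (η₁,…,η_m) by P(η) = ∫_ℝ ∏_{j∈S₁} h(η_j + σu) · ∏_{j∈S₀} (1 - h(η_j + σu)) φ(u) du, where S₀, S₁ partition {1,…,m}, σ > 0, h is the logistic function, and φ the standard normal density. Then for each j, |∂P/∂η_j| / P(η) ≤ 2. -/
open MeasureTheory

noncomputable def logistic (t : ℝ) : ℝ := 1 / (1 + Real.exp (-t))
noncomputable def stdNormalPDF (u : ℝ) : ℝ :=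
  (Real.sqrt (2 * Real.pi))⁻¹ * Real.exp (-u ^ 2 / 2)

noncomputable def margLik (m : ℕ) (S₁ : Finset (Fin m)) (σ : ℝ)
    (η : Fin m → ℝ) : ℝ :=
  ∫ u : ℝ, (∏ j ∈ S₁, logistic (η j + σ * u)) *
    (∏ j ∈ S₁ᶜ, (1 - logistic (η j + σ * u))) * stdNormalPDF u

noncomputable def margLikDeriv (m : ℕ) (S₁ : Finset (Fin m)) (σ : ℝ)
    (η : Fin m → ℝ) (j : Fin m) : ℝ :=
  ∫ u : ℝ, (logistic (η j + σ * u) * (1 - logistic (η j + σ * u))) *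
    (∏ l ∈ S₁ \ {j}, logistic (η l + σ * u)) *
    (∏ l ∈ S₁ᶜ \ {j}, (1 - logistic (η l + σ * u))) * stdNormalPDF u

lemma logistic_pos (t : ℝ) : 0 < logistic t := by
  unfold logistic; positivity

lemma logistic_lt_one (t : ℝ) : logistic t < 1 := by
  unfold logistic
  rw [div_lt_one (by positivity)]
  linarith [Real.exp_pos (-t)]

lemma stdNormalPDF_nonneg (u : ℝ) : 0 ≤ stdNormalPDF u := by
  unfold stdNormalPDF; positivity

lemma stdNormalPDF_integrable : Integrable stdNormalPDF := by
  have h : Integrable fun u : ℝ => Real.exp (-(1/2) * u ^ 2) :=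
    integrable_exp_neg_mul_sq (by norm_num)
  have := h.const_mul (Real.sqrt (2 * Real.pi))⁻¹
  convert this using 2 with u
  unfold stdNormalPDF
  ring_nf

theorem deriv_over_lik_le_two (m : ℕ) (S₁ : Finset (Fin m)) (σ : ℝ)
    (hσ : 0 < σ) (η : Fin m → ℝ) (j : Fin m) :
    |margLikDeriv m S₁ σ η j| / margLik m S₁ σ η ≤ 2 := by
  set f : ℝ → ℝ := fun u => (∏ j ∈ S₁, logistic (η j + σ * u)) *
    (∏ j ∈ S₁ᶜ, (1 - logistic (η j + σ * u))) * stdNormalPDF u with hf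
  set g : ℝ → ℝ := fun u => (logistic (η j + σ * u) * (1 - logistic (η j + σ * u))) *
    (∏ l ∈ S₁ \ {j}, logistic (η l + σ * u)) *
    (∏ l ∈ S₁ᶜ \ {j}, (1 - logistic (η l + σ * u))) * stdNormalPDF u with hg
  have hL0 : ∀ t : ℝ, (0:ℝ) ≤ logistic t := fun t => (logistic_pos t).le
  have hL1 : ∀ t : ℝ, logistic t ≤ 1 := fun t => (logistic_lt_one t).le
  have hprod1 : ∀ (s : Finset (Fin m)) (u : ℝ),
      0 ≤ ∏ l ∈ s, logistic (η l + σ * u) ∧ ∏ l ∈ s, logistic (η l + σ * u) ≤ 1 := by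
    intro s u
    exact ⟨Finset.prod_nonneg fun l _ => hL0 _,
      Finset.prod_le_one (fun l _ => hL0 _) (fun l _ => hL1 _)⟩
  have hprod0 : ∀ (s : Finset (Fin m)) (u : ℝ),
      0 ≤ ∏ l ∈ s, (1 - logistic (η l + σ * u)) ∧
        ∏ l ∈ s, (1 - logistic (η l + σ * u)) ≤ 1 := by
    intro s u
    exact ⟨Finset.prod_nonneg fun l _ => by linarith [hL1 (η l + σ * u)],
      Finset.prod_le_one (fun l _ => by linarith [hL1 (η l + σ * u)])
        (fun l _ => by linarith [hL0 (η l + σ * u)])⟩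
  have hf_nonneg : ∀ u, 0 ≤ f u := by
    intro u
    exact mul_nonneg (mul_nonneg (hprod1 S₁ u).1 (hprod0 S₁ᶜ u).1) (stdNormalPDF_nonneg u)
  have hg_nonneg : ∀ u, 0 ≤ g u := by
    intro u
    have := hL0 (η j + σ * u); have := hL1 (η j + σ * u)
    exact mul_nonneg (mul_nonneg (mul_nonneg (by nlinarith) (hprod1 _ u).1)
      (hprod0 _ u).1) (stdNormalPDF_nonneg u)
  have hgf : ∀ u, g u ≤ f u := by
    intro u
    by_cases hj : j ∈ S₁
    · have e1 : S₁ᶜ \ {j} = S₁ᶜ := by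
        rw [Finset.sdiff_singleton_eq_erase, Finset.erase_eq_of_notMem (by simpa using hj)]
      have e2 : ∏ l ∈ S₁, logistic (η l + σ * u)
          = logistic (η j + σ * u) * ∏ l ∈ S₁ \ {j}, logistic (η l + σ * u) := by
        rw [Finset.sdiff_singleton_eq_erase]
        exact (Finset.mul_prod_erase S₁ (fun l => logistic (η l + σ * u)) hj).symm
      have key : g u = (1 - logistic (η j + σ * u)) * f u := by
        simp only [hf, hg, e1, e2]; ring
      rw [key]
      have := hL0 (η j + σ * u)
      calc (1 - logistic (η j + σ * u)) * f u ≤ 1 * f u := by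
            apply mul_le_mul_of_nonneg_right (by linarith) (hf_nonneg u)
        _ = f u := one_mul _
    · have hj' : j ∈ S₁ᶜ := Finset.mem_compl.mpr hj
      have e1 : S₁ \ {j} = S₁ := by
        rw [Finset.sdiff_singleton_eq_erase, Finset.erase_eq_of_notMem hj]
      have e2 : ∏ l ∈ S₁ᶜ, (1 - logistic (η l + σ * u))
          = (1 - logistic (η j + σ * u)) * ∏ l ∈ S₁ᶜ \ {j}, (1 - logistic (η l + σ * u)) := by
        rw [Finset.sdiff_singleton_eq_erase]
        exact (Finset.mul_prod_erase S₁ᶜ (fun l => 1 - logistic (η l + σ * u)) hj').symm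
      have key : g u = logistic (η j + σ * u) * f u := by
        simp only [hf, hg, e1, e2]; ring
      rw [key]
      calc logistic (η j + σ * u) * f u ≤ 1 * f u := by
            apply mul_le_mul_of_nonneg_right (hL1 _) (hf_nonneg u)
        _ = f u := one_mul _
  have hf_le : ∀ u, f u ≤ stdNormalPDF u := by
    intro u
    calc f u ≤ 1 * 1 * stdNormalPDF u := by
          apply mul_le_mul_of_nonneg_right _ (stdNormalPDF_nonneg u)
          exact mul_le_mul (hprod1 S₁ u).2 (hprod0 S₁ᶜ u).2 (hprod0 S₁ᶜ u).1 zero_le_one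
      _ = stdNormalPDF u := by ring
  have hLcont : ∀ l : Fin m, Continuous fun u : ℝ => logistic (η l + σ * u) := by
    intro l
    unfold logistic
    apply Continuous.div continuous_const
    · fun_prop
    · intro u; positivity
  have hφcont : Continuous stdNormalPDF := by unfold stdNormalPDF; fun_prop
  have hf_cont : Continuous f := by
    apply Continuous.mul _ hφcont
    exact (continuous_finset_prod _ fun l _ => hLcont l).mul
      (continuous_finset_prod _ fun l _ => (continuous_const.sub (hLcont l)))
  have hg_cont : Continuous g := by
    apply Continuous.mul _ hφcont
    exact (((hLcont j).mul (continuous_const.sub (hLcont j))).mul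
      (continuous_finset_prod _ fun l _ => hLcont l)).mul
      (continuous_finset_prod _ fun l _ => (continuous_const.sub (hLcont l)))
  have hf_int : Integrable f :=
    stdNormalPDF_integrable.mono' hf_cont.aestronglyMeasurable
      (Filter.Eventually.of_forall fun u => by
        rw [Real.norm_eq_abs, abs_of_nonneg (hf_nonneg u)]; exact hf_le u)
  have hg_int : Integrable g :=
    stdNormalPDF_integrable.mono' hg_cont.aestronglyMeasurable
      (Filter.Eventually.of_forall fun u => by
        rw [Real.norm_eq_abs, abs_of_nonneg (hg_nonneg u)]
        exact (hgf u).trans (hf_le u))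
  have hD : margLikDeriv m S₁ σ η j = ∫ u, g u := rfl
  have hP : margLik m S₁ σ η = ∫ u, f u := rfl
  have hD_nonneg : 0 ≤ margLikDeriv m S₁ σ η j := by
    rw [hD]; exact integral_nonneg hg_nonneg
  have hP_nonneg : 0 ≤ margLik m S₁ σ η := by
    rw [hP]; exact integral_nonneg hf_nonneg
  have hDP : margLikDeriv m S₁ σ η j ≤ margLik m S₁ σ η := by
    rw [hD, hP]; exact integral_mono hg_int hf_int hgf
  rw [abs_of_nonneg hD_nonneg]
  calc margLikDeriv m S₁ σ η j / margLik m S₁ σ η ≤ 1 :=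
        div_le_one_of_le₀ hDP hP_nonneg
    _ ≤ 2 := by norm_num
end

section
/- Let A > 0, m ≥ 1, ε > 0, L > 0, and κ ≤ m a positive integer. Suppose g : ℝ → [0,1] satisfies, for all t ∈ (-Aσ, Aσ), the bound ∏_{l=1}^{κ}(1 - L·e^{-σA/((1+ε)m) + |t|/((1+ε)m)}) ≤ g(t) ≤ 1 (whenever the lower bound is nonnegative). Then |∫_{-Aσ}^{Aσ} h'(t)(1 - g(t)) dt| ≤ ∑_{l=1}^{κ} binom(κ,l)·L^l·e^{-lσA/((1+ε)m)}·∫_{-∞}^{∞} e^{l|t|/((1+ε)m)} h'(t) dt, where h is the logistic function; in particular this bound is O(e^{-σA/((1+ε)m)}) as σ → ∞. -/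
open MeasureTheory

/-- The right-hand side bound: ∑_{l=1}^κ C(κ,l) L^l e^{-lσA/((1+ε)m)}
∫ e^{l|t|/((1+ε)m)} h'(t) dt. -/
noncomputable def rhsBound (A ε L : ℝ) (m κ : ℕ) (σ : ℝ) : ℝ :=
  ∑ l ∈ Finset.Icc 1 κ, (κ.choose l : ℝ) * L ^ l *
    Real.exp (-(l * σ * A) / ((1 + ε) * m)) *
    ∫ t : ℝ, Real.exp (l * |t| / ((1 + ε) * m)) * (logistic t * (1 - logistic t))

/-!
With `x = L e^{(|t| - σA)/((1+ε)m)}`, the hypothesis and Bernoulli's inequality give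
`1 - g ≤ 1 - (1 - x) ^ κ ≤ κ x` where `x ≤ 1`, and trivially `1 - g ≤ 1 < κ x` elsewhere. So the
integral is bounded by the `l = 1` term of `rhsBound`, which is finite because
`h'(t) ≤ e^{-|t|}` beats `e^{|t|/((1+ε)m)}` once `(1+ε)m > 1`. The decay in `σ` holds termwise,
the `l`-th term carrying the factor `e^{-lσA/((1+ε)m)} ≤ e^{-σA/((1+ε)m)}`.
-/

open Real Set

lemma logistic_eq_sigmoid : logistic = sigmoid := funext fun _ => one_div _

namespace Real

lemma sigmoid_mul_one_sub_sigmoid_nonneg (x : ℝ) : 0 ≤ sigmoid x * (1 - sigmoid x) :=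
  mul_nonneg (sigmoid_nonneg x) (sub_nonneg.2 (sigmoid_le_one x))

lemma sigmoid_mul_one_sub_sigmoid_le_exp_neg (x : ℝ) :
    sigmoid x * (1 - sigmoid x) ≤ exp (-x) := by
  rw [← sigmoid_neg, ← sigmoid_mul_rexp_neg, ← mul_assoc]
  have hsq : sigmoid x * sigmoid x ≤ 1 :=
    mul_le_one₀ (sigmoid_le_one x) (sigmoid_nonneg x) (sigmoid_le_one x)
  simpa using mul_le_mul_of_nonneg_right hsq (exp_pos (-x)).le

lemma sigmoid_mul_one_sub_sigmoid_le_exp_neg_abs (x : ℝ) :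
    sigmoid x * (1 - sigmoid x) ≤ exp (-|x|) := by
  rcases abs_cases x with ⟨hx, _⟩ | ⟨hx, _⟩
  · rw [hx]
    exact sigmoid_mul_one_sub_sigmoid_le_exp_neg x
  · have h := sigmoid_mul_one_sub_sigmoid_le_exp_neg (-x)
    rwa [sigmoid_neg, sub_sub_cancel, mul_comm, ← hx] at h

end Real

lemma integrable_exp_neg_mul_abs {b : ℝ} (hb : 0 < b) :
    Integrable fun t : ℝ => exp (-b * |t|) := by
  rw [← integrableOn_univ, ← Iic_union_Ioi (a := 0)]
  refine IntegrableOn.union ?_ ?_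
  · refine (integrableOn_exp_mul_Iic hb 0).congr_fun (fun t ht => ?_) measurableSet_Iic
    rw [abs_of_nonpos ht, neg_mul_neg]
  · refine (integrableOn_exp_mul_Ioi (neg_neg_of_pos hb) 0).congr_fun (fun t ht => ?_)
      measurableSet_Ioi
    rw [abs_of_pos ht]

lemma integrable_exp_mul_abs_mul_sigmoid_deriv {c : ℝ} (hc : c < 1) :
    Integrable fun t : ℝ => exp (c * |t|) * (sigmoid t * (1 - sigmoid t)) := by
  refine (integrable_exp_neg_mul_abs (b := 1 - c) (by linarith)).mono' (by fun_prop) ?_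
  refine ae_of_all _ fun t => ?_
  rw [norm_of_nonneg (mul_nonneg (exp_pos _).le (sigmoid_mul_one_sub_sigmoid_nonneg t))]
  calc exp (c * |t|) * (sigmoid t * (1 - sigmoid t))
      ≤ exp (c * |t|) * exp (-|t|) := by
        gcongr
        exact sigmoid_mul_one_sub_sigmoid_le_exp_neg_abs t
    _ = exp (-(1 - c) * |t|) := by rw [← exp_add]; ring_nf

lemma abs_setIntegral_sigmoid_deriv_mul_le {s : Set ℝ} (hs : MeasurableSet s) {f : ℝ → ℝ}
    {K c : ℝ} (hK : 0 ≤ K) (hc : c < 1) (hf : ∀ t ∈ s, |f t| ≤ K * exp (c * |t|)) :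
    |∫ t in s, sigmoid t * (1 - sigmoid t) * f t| ≤
      K * ∫ t, exp (c * |t|) * (sigmoid t * (1 - sigmoid t)) := by
  have hbound := (integrable_exp_mul_abs_mul_sigmoid_deriv hc).const_mul K
  calc |∫ t in s, sigmoid t * (1 - sigmoid t) * f t|
      ≤ ∫ t in s, K * (exp (c * |t|) * (sigmoid t * (1 - sigmoid t))) := by
        rw [← Real.norm_eq_abs]
        refine norm_integral_le_of_norm_le hbound.integrableOn
          ((ae_restrict_iff' hs).2 (ae_of_all _ fun t ht => ?_))
        have hd := sigmoid_mul_one_sub_sigmoid_nonneg t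
        rw [norm_mul, norm_of_nonneg hd, Real.norm_eq_abs]
        calc sigmoid t * (1 - sigmoid t) * |f t|
            ≤ sigmoid t * (1 - sigmoid t) * (K * exp (c * |t|)) := by gcongr; exact hf t ht
          _ = _ := by ring
    _ ≤ ∫ t, K * (exp (c * |t|) * (sigmoid t * (1 - sigmoid t))) :=
        setIntegral_le_integral hbound (ae_of_all _ fun t =>
          mul_nonneg hK (mul_nonneg (exp_pos _).le (sigmoid_mul_one_sub_sigmoid_nonneg t)))
    _ = _ := integral_const_mul _ _

lemma one_sub_le_mul_of_one_sub_pow_le {x y : ℝ} {n : ℕ} (hn : 1 ≤ n) (hy : 0 ≤ y)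
    (h : 0 ≤ (1 - x) ^ n → (1 - x) ^ n ≤ y) : 1 - y ≤ n * x := by
  rcases le_or_gt x 1 with hx | hx
  · have hbern := one_add_mul_le_pow (a := -x) (by linarith) n
    rw [← sub_eq_add_neg] at hbern
    linarith [h (pow_nonneg (sub_nonneg.2 hx) n)]
  · have hn' : (1 : ℝ) ≤ n := by exact_mod_cast hn
    nlinarith

section rhsBound

variable {A ε L : ℝ} {m κ : ℕ}

lemma rhsBound_term_nonneg (hL : 0 ≤ L) (l : ℕ) :
    0 ≤ (κ.choose l : ℝ) * L ^ l *
      ∫ t, exp (l * |t| / ((1 + ε) * m)) * (sigmoid t * (1 - sigmoid t)) :=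
  mul_nonneg (by positivity) (integral_nonneg fun t =>
    mul_nonneg (exp_pos _).le (sigmoid_mul_one_sub_sigmoid_nonneg t))

lemma mul_exp_mul_integral_le_rhsBound (hL : 0 ≤ L) (hκ : 1 ≤ κ) (σ : ℝ) :
    κ * L * exp (-(σ * A) / ((1 + ε) * m)) *
      ∫ t, exp (((1 + ε) * m)⁻¹ * |t|) * (sigmoid t * (1 - sigmoid t)) ≤
      rhsBound A ε L m κ σ := by
  rw [rhsBound, logistic_eq_sigmoid]
  refine le_of_eq_of_le ?_ (Finset.single_le_sum (fun l _ => ?_) (Finset.mem_Icc.2 ⟨le_rfl, hκ⟩))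
  · simp only [Nat.choose_one_right, pow_one, Nat.cast_one, one_mul, div_eq_inv_mul]
  · simpa only [mul_right_comm _ (exp _)] using
      mul_nonneg (rhsBound_term_nonneg (ε := ε) (m := m) hL l) (exp_pos _).le

lemma rhsBound_le_rhsBound_zero_mul_exp (hA : 0 ≤ A) (hε : 0 ≤ 1 + ε) (hL : 0 ≤ L)
    {σ : ℝ} (hσ : 0 ≤ σ) :
    rhsBound A ε L m κ σ ≤ rhsBound A ε L m κ 0 * exp (-(σ * A) / ((1 + ε) * m)) := by
  simp only [rhsBound, logistic_eq_sigmoid, mul_zero, zero_mul, neg_zero, zero_div, exp_zero,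
    mul_one, Finset.sum_mul]
  refine Finset.sum_le_sum fun l hl => ?_
  have hl : (1 : ℝ) ≤ l := by exact_mod_cast (Finset.mem_Icc.1 hl).1
  have hexp : exp (-(l * σ * A) / ((1 + ε) * m)) ≤ exp (-(σ * A) / ((1 + ε) * m)) := by
    gcongr
    nlinarith [mul_nonneg hσ hA]
  simpa only [mul_right_comm _ (exp _)] using
    mul_le_mul_of_nonneg_left hexp (rhsBound_term_nonneg (ε := ε) (m := m) (κ := κ) hL l)

end rhsBound

theorem binomial_tail_bound_general (A ε L : ℝ) (hA : 0 < A) (hε : 0 < ε) (hL : 0 < L)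
    (m κ : ℕ) (hκ : 1 ≤ κ) (hκm : κ ≤ m) (σ : ℝ)
    (g : ℝ → ℝ) (hg01 : ∀ t, 0 ≤ g t ∧ g t ≤ 1)
    (hglb : ∀ t ∈ Set.Ioo (-(A * σ)) (A * σ),
      0 ≤ (1 - L * Real.exp (-(σ * A) / ((1 + ε) * m) + |t| / ((1 + ε) * m))) ^ κ →
      (1 - L * Real.exp (-(σ * A) / ((1 + ε) * m) + |t| / ((1 + ε) * m))) ^ κ ≤ g t) :
    |∫ t in Set.Ioo (-(A * σ)) (A * σ),
        logistic t * (1 - logistic t) * (1 - g t)| ≤ rhsBound A ε L m κ σ ∧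
    ∃ C : ℝ, ∀ σ' : ℝ, 1 ≤ σ' →
      rhsBound A ε L m κ σ' ≤ C * Real.exp (-(σ' * A) / ((1 + ε) * m)) := by
  have hm : (1 : ℝ) ≤ m := by exact_mod_cast hκ.trans hκm
  have hd : 1 < (1 + ε) * m := by nlinarith
  refine ⟨?_, _, fun σ' hσ' =>
    rhsBound_le_rhsBound_zero_mul_exp hA.le (by linarith) hL.le (by linarith)⟩
  rw [logistic_eq_sigmoid]
  refine (abs_setIntegral_sigmoid_deriv_mul_le measurableSet_Ioo (by positivity)
    (inv_lt_one_of_one_lt₀ hd) fun t ht => ?_).trans (mul_exp_mul_integral_le_rhsBound hL.le hκ σ)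
  rw [abs_of_nonneg (sub_nonneg.2 (hg01 t).2)]
  calc 1 - g t ≤ κ * (L * exp (-(σ * A) / ((1 + ε) * m) + |t| / ((1 + ε) * m))) :=
        one_sub_le_mul_of_one_sub_pow_le hκ (hg01 t).1 (hglb t ht)
    _ = _ := by rw [exp_add, div_eq_inv_mul |t|]; ring

theorem binomial_tail_bound (A ε L : ℝ) (hA : 0 < A) (hε : 0 < ε) (hL : 0 < L)
    (m κ : ℕ) (hκ : 1 ≤ κ) (hκm : κ ≤ m) (σ : ℝ) (hσ : 0 < σ)
    (g : ℝ → ℝ) (hg01 : ∀ t, 0 ≤ g t ∧ g t ≤ 1)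
    (hglb : ∀ t ∈ Set.Ioo (-(A * σ)) (A * σ),
      0 ≤ (1 - L * Real.exp (-(σ * A) / ((1 + ε) * m) + |t| / ((1 + ε) * m))) ^ κ →
      (1 - L * Real.exp (-(σ * A) / ((1 + ε) * m) + |t| / ((1 + ε) * m))) ^ κ ≤ g t) :
    |∫ t in Set.Ioo (-(A * σ)) (A * σ),
        logistic t * (1 - logistic t) * (1 - g t)| ≤ rhsBound A ε L m κ σ ∧
    ∃ C : ℝ, ∀ σ' : ℝ, 1 ≤ σ' →
      rhsBound A ε L m κ σ' ≤ C * Real.exp (-(σ' * A) / ((1 + ε) * m)) :=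
  binomial_tail_bound_general A ε L hA hε hL m κ hκ hκm σ g hg01 hglb
end
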